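/- Let n ≥ 0 and q ≥ 1 be integers, let I_1 < ⋯ < I_q be a partition of {0,1,…,n} into nonempty consecutive intervals of integers, set 𝔸_t := {r ∈ ℍ_n : r_1 ∈ I_t}, fix any choice of r-functions (f_r)_{r∈ℍ_n}, and set F_t := Σ_{r∈𝔸_t} f_r. Then for arbitrary real numbers c_1, …, c_q: ∫_{[0,1]^3} ∏_{t=1}^{q} (1 + c_t F_t(x)) dx = 1. -/

import Mathlib

open MeasureTheory
open scoped ENNReal Classical

/-- The `L^∞`-normalized Haar function of the dyadic interval `[j/2^k, (j+1)/2^k)`: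
it is `-1` on the left half, `+1` on the right half, and `0` outside. -/
noncomputable def haar1 (k j : ℕ) (x : ℝ) : ℝ :=
  if (j : ℝ) / 2 ^ k ≤ x ∧ x < ((j : ℝ) + 1 / 2) / 2 ^ k then -1
  else if ((j : ℝ) + 1 / 2) / 2 ^ k ≤ x ∧ x < ((j : ℝ) + 1) / 2 ^ k then 1
  else 0

/-- A dyadic rectangle in `[0,1]^d` is encoded by its levels `R.1` and positions `R.2`;
its `i`-th side interval is `[R.2 i / 2 ^ R.1 i, (R.2 i + 1) / 2 ^ R.1 i)`.
`haarR R` is the associated (tensor product) Haar function. -/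
noncomputable def haarR {d : ℕ} (R : (Fin d → ℕ) × (Fin d → ℕ)) (x : Fin d → ℝ) : ℝ :=
  ∏ i, haar1 (R.1 i) (R.2 i) (x i)

/-- The dyadic rectangles in `[0,1]^d` of volume exactly `2 ^ (-n)`. -/
def rectsEq (d n : ℕ) : Finset ((Fin d → ℕ) × (Fin d → ℕ)) :=
  ((Fintype.piFinset fun _ => Finset.range (n + 1)) ×ˢ
      (Fintype.piFinset fun _ => Finset.range (2 ^ n))).filter
    fun R => (∑ i, R.1 i) = n ∧ ∀ i, R.2 i < 2 ^ R.1 i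

/-- The dyadic rectangles in `[0,1]^d` of volume at least `2 ^ (-n)`. -/
def rectsGe (d n : ℕ) : Finset ((Fin d → ℕ) × (Fin d → ℕ)) :=
  ((Fintype.piFinset fun _ => Finset.range (n + 1)) ×ˢ
      (Fintype.piFinset fun _ => Finset.range (2 ^ n))).filter
    fun R => (∑ i, R.1 i) ≤ n ∧ ∀ i, R.2 i < 2 ^ R.1 i

/-- The unit cube `[0,1]^d`. -/
def unitCube (d : ℕ) : Set (Fin d → ℝ) := Set.univ.pi fun _ => Set.Icc 0 1

/-- `ℍ_n`: triples `r = (r 0, r 1, r 2)` of natural numbers with `r 0 + r 1 + r 2 = n`. -/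
def Hn (n : ℕ) : Finset (Fin 3 → ℕ) :=
  (Fintype.piFinset fun _ => Finset.range (n + 1)).filter fun r => ∑ i, r i = n

/-- The `r`-function with parameter `r ∈ ℍ_n` built from the signs `ε`:
`f_r = ∑_{R ∈ 𝓡_r} ε_R h_R`, the sum over all dyadic rectangles with levels `r`. -/
noncomputable def rfun (ε : ((Fin 3 → ℕ) × (Fin 3 → ℕ)) → ℝ) (r : Fin 3 → ℕ)
    (x : Fin 3 → ℝ) : ℝ :=
  ∑ j ∈ Fintype.piFinset (fun i => Finset.range (2 ^ r i)), ε (r, j) * haarR (r, j) x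

/-- `ℂ(2)`: pairs of distinct vectors in `ℍ_n` agreeing in the second coordinate. -/
def C2 (n : ℕ) : Finset ((Fin 3 → ℕ) × (Fin 3 → ℕ)) :=
  ((Hn n) ×ˢ (Hn n)).filter fun rs => rs.1 ≠ rs.2 ∧ rs.1 1 = rs.2 1

/-- Given partition boundaries `m`, the set `𝔸_t ⊆ ℍ_n` of vectors whose first
coordinate lies in the `t`-th interval `I_t = [m (t-1), m t)` of the partition. -/
def Apart (n : ℕ) (m : ℕ → ℕ) (t : ℕ) : Finset (Fin 3 → ℕ) :=
  (Hn n).filter fun r => m (t - 1) ≤ r 0 ∧ r 0 < m t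

/-!
Expanding the product turns the integral into a sum, over `U ⊆ {1, …, q}`, of `∏_{t ∈ U} c_t`
times integrals `∫ ∏_{t ∈ U} ε_{R_t} h_{R_t}` with one rectangle `R_t` of first level in `I_t`
for each `t`. Such an integral factors over the coordinates, and its first factor vanishes: the
first levels are distinct because the `I_t` are disjoint, and the Haar function of the finest
level has mean zero on its interval, on which all the coarser ones are constant. Only `U = ∅`
survives, contributing the volume `1` of the cube.
-/

open Finset

section Expansion

variable {ι α : Type*} [MeasurableSpace α] {μ : Measure α}

lemma integrable_prod_of_memLp_top [IsFiniteMeasure μ] {s : Finset ι} {f : ι → α → ℝ}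
    (hf : ∀ t ∈ s, MemLp (f t) ∞ μ) : Integrable (fun x => ∏ t ∈ s, f t x) μ :=
  (MemLp.prod' hf).integrable (by simp)

lemma integral_prod_sum_eq_zero [IsFiniteMeasure μ] [DecidableEq ι] {κ : Type*} (s : Finset ι)
    (D : ι → Finset κ) (g : ι → κ → α → ℝ) (hg : ∀ t ∈ s, ∀ k ∈ D t, MemLp (g t k) ∞ μ)
    (hzero : ∀ p ∈ s.pi D, ∫ x, ∏ t ∈ s.attach, g t (p t t.2) x ∂μ = 0) :
    ∫ x, ∏ t ∈ s, ∑ k ∈ D t, g t k x ∂μ = 0 := by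
  simp_rw [prod_sum]
  rw [integral_finsetSum _ fun p hp => ?_]
  · exact sum_eq_zero hzero
  · exact integrable_prod_of_memLp_top fun t _ => hg t t.2 _ (mem_pi.mp hp t t.2)

lemma integral_prod_one_add_mul [IsProbabilityMeasure μ] (s : Finset ι) (c : ι → ℝ)
    (F : ι → α → ℝ) (hF : ∀ t ∈ s, MemLp (F t) ∞ μ)
    (hzero : ∀ u ⊆ s, u.Nonempty → ∫ x, ∏ t ∈ u, F t x ∂μ = 0) :
    ∫ x, ∏ t ∈ s, (1 + c t * F t x) ∂μ = 1 := by
  have hexpand : ∀ x, ∏ t ∈ s, (1 + c t * F t x) =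
      ∑ u ∈ s.powerset, (∏ t ∈ u, c t) * ∏ t ∈ u, F t x := by
    intro x
    simp_rw [add_comm (1 : ℝ), prod_add, prod_const_one, mul_one, prod_mul_distrib]
  simp_rw [hexpand]
  rw [integral_finsetSum _ fun u hu =>
    (integrable_prod_of_memLp_top fun t ht => hF t (mem_powerset.mp hu ht)).const_mul _]
  simp_rw [integral_const_mul]
  rw [sum_eq_single_of_mem ∅ (empty_mem_powerset s) fun u hu hne => by
    rw [hzero u (mem_powerset.mp hu) (nonempty_iff_ne_empty.mpr hne), mul_zero]]
  simp

end Expansion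

lemma floor_mul_two_pow_eq_iff (x : ℝ) (k : ℕ) (N : ℤ) :
    ⌊x * 2 ^ k⌋ = N ↔ N / 2 ^ k ≤ x ∧ x < (N + 1) / 2 ^ k := by
  rw [Int.floor_eq_iff, div_le_iff₀ (by positivity), lt_div_iff₀ (by positivity)]

lemma haar1_eq_ite_floor (k j : ℕ) (x : ℝ) :
    haar1 k j x = if ⌊x * 2 ^ (k + 1)⌋ = 2 * j then -1
      else if ⌊x * 2 ^ (k + 1)⌋ = 2 * j + 1 then 1 else 0 := by
  have h2 : (2 : ℝ) ^ (k + 1) = 2 * 2 ^ k := pow_succ' 2 k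
  have e1 : (j : ℝ) / 2 ^ k = 2 * j / 2 ^ (k + 1) := by rw [h2]; field_simp
  have e2 : ((j : ℝ) + 1 / 2) / 2 ^ k = (2 * j + 1) / 2 ^ (k + 1) := by
    rw [h2]; field_simp
  have e3 : ((j : ℝ) + 1) / 2 ^ k = (2 * j + 1 + 1) / 2 ^ (k + 1) := by
    rw [h2]; field_simp; ring
  simp only [haar1, floor_mul_two_pow_eq_iff, e1, e2, e3]
  push_cast
  rfl

lemma haar1_eq_of_floor_eq {k K : ℕ} (hk : k < K) (j : ℕ) {x y : ℝ}
    (h : ⌊x * 2 ^ K⌋ = ⌊y * 2 ^ K⌋) : haar1 k j x = haar1 k j y := by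
  have hK : (2 : ℝ) ^ K = 2 ^ (k + 1) * 2 ^ (K - (k + 1)) := by
    rw [← pow_add]; congr 1; omega
  have hcoarse : ∀ z : ℝ, ⌊z * 2 ^ (k + 1)⌋ = ⌊z * 2 ^ K⌋ / (2 ^ (K - (k + 1)) : ℕ) := by
    intro z
    rw [← Int.floor_div_natCast, hK]
    push_cast
    field_simp
  rw [haar1_eq_ite_floor, haar1_eq_ite_floor, hcoarse x, hcoarse y, h]

lemma floor_mul_two_pow_eq_of_haar1_ne_zero {k j : ℕ} {x : ℝ} (h : haar1 k j x ≠ 0) :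
    ⌊x * 2 ^ k⌋ = j := by
  rw [haar1_eq_ite_floor] at h
  have hdiv : ⌊x * 2 ^ k⌋ = ⌊x * 2 ^ (k + 1)⌋ / (2 : ℕ) := by
    rw [← Int.floor_div_natCast, pow_succ]; push_cast; field_simp
  split_ifs at h with h1 h2 <;> first | exact absurd rfl h | omega

lemma measurable_haar1 (k j : ℕ) : Measurable (haar1 k j) :=
  Measurable.ite measurableSet_Ico measurable_const
    (Measurable.ite measurableSet_Ico measurable_const measurable_const)

lemma abs_haar1_le_one (k j : ℕ) (x : ℝ) : |haar1 k j x| ≤ 1 := by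
  unfold haar1; split_ifs <;> norm_num

lemma haar1_eq_zero_of_notMem_Icc {k j : ℕ} (hj : j < 2 ^ k) {x : ℝ}
    (hx : x ∉ Set.Icc 0 1) : haar1 k j x = 0 := by
  by_contra h
  obtain ⟨hlow, hhigh⟩ := (floor_mul_two_pow_eq_iff x k j).mp
    (floor_mul_two_pow_eq_of_haar1_ne_zero h)
  refine hx ⟨le_trans (by positivity) hlow, hhigh.le.trans ?_⟩
  rw [div_le_one (by positivity)]
  exact_mod_cast (hj : j + 1 ≤ 2 ^ k)

lemma integral_haar1 (k j : ℕ) : ∫ x, haar1 k j x = 0 := by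
  set a : ℝ := j / 2 ^ k
  set b : ℝ := (j + 1 / 2) / 2 ^ k
  set c : ℝ := (j + 1) / 2 ^ k
  have hab : a ≤ b := by simp only [a, b]; gcongr; norm_num
  have hbc : b ≤ c := by simp only [b, c]; gcongr; norm_num
  have hsplit : haar1 k j =
      (Set.Ico a b).indicator (fun _ => -1) + (Set.Ico b c).indicator (fun _ => 1) := by
    funext x
    simp only [haar1, Pi.add_apply, Set.indicator_apply, Set.mem_Ico, a, b, c] at hab hbc ⊢
    split_ifs <;> grind
  have hint : ∀ (u v e : ℝ), Integrable ((Set.Ico u v).indicator fun _ => e) :=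
    fun u v e => (integrable_indicator_iff measurableSet_Ico).mpr
      (integrableOn_const measure_Ico_lt_top.ne)
  rw [hsplit, integral_add' (hint _ _ _) (hint _ _ _),
    integral_indicator_const _ measurableSet_Ico, integral_indicator_const _ measurableSet_Ico,
    Real.volume_real_Ico_of_le hab, Real.volume_real_Ico_of_le hbc]
  simp only [smul_eq_mul, a, b, c]
  field_simp
  ring

lemma setIntegral_Icc_haar1 {k j : ℕ} (hj : j < 2 ^ k) :
    ∫ x in Set.Icc 0 1, haar1 k j x = 0 := by
  rw [setIntegral_eq_integral_of_forall_compl_eq_zero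
    fun x hx => haar1_eq_zero_of_notMem_Icc hj hx, integral_haar1]

lemma setIntegral_Icc_prod_haar1_eq_zero {ι : Type*} {s : Finset ι} (hs : s.Nonempty)
    {k j : ι → ℕ} (hk : Set.InjOn k s) (hj : ∀ t ∈ s, j t < 2 ^ k t) :
    ∫ x in Set.Icc 0 1, ∏ t ∈ s, haar1 (k t) (j t) x = 0 := by
  obtain ⟨t₀, ht₀, hmax⟩ := s.exists_max_image k hs
  -- the coarser factors are constant on the dyadic interval carrying the finest one
  have hfactor : ∀ x, ∏ t ∈ s, haar1 (k t) (j t) x =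
      (∏ t ∈ s.erase t₀, haar1 (k t) (j t) (j t₀ / 2 ^ k t₀)) * haar1 (k t₀) (j t₀) x := by
    intro x
    rw [← mul_prod_erase s _ ht₀, mul_comm]
    by_cases h : haar1 (k t₀) (j t₀) x = 0
    · simp [h]
    congr 1
    refine prod_congr rfl fun t ht => haar1_eq_of_floor_eq (K := k t₀) ?_ _ ?_
    · exact (hmax t (mem_of_mem_erase ht)).lt_of_ne
        fun h' => ne_of_mem_erase ht (hk (mem_of_mem_erase ht) ht₀ h')
    · rw [floor_mul_two_pow_eq_of_haar1_ne_zero h, div_mul_cancel₀ _ (by positivity),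
        Int.floor_natCast]
  simp_rw [hfactor]
  rw [integral_const_mul, setIntegral_Icc_haar1 (hj t₀ ht₀), mul_zero]

lemma volume_restrict_unitCube (d : ℕ) :
    volume.restrict (unitCube d) = Measure.pi fun _ => volume.restrict (Set.Icc (0 : ℝ) 1) := by
  rw [unitCube, volume_pi, Measure.restrict_pi_pi]

lemma setIntegral_unitCube_prod_haarR_eq_zero {ι : Type*} {d : ℕ} {s : Finset ι}
    (hs : s.Nonempty) {R : ι → (Fin d → ℕ) × (Fin d → ℕ)} (i : Fin d)
    (hinj : Set.InjOn (fun t => (R t).1 i) s) (hpos : ∀ t ∈ s, (R t).2 i < 2 ^ (R t).1 i) :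
    ∫ x in unitCube d, ∏ t ∈ s, haarR (R t) x = 0 := by
  simp_rw [haarR, prod_comm (s := s)]
  rw [volume_restrict_unitCube,
    integral_fintype_prod_eq_prod fun i y => ∏ t ∈ s, haar1 ((R t).1 i) ((R t).2 i) y]
  exact prod_eq_zero (mem_univ i) (setIntegral_Icc_prod_haar1_eq_zero hs hinj hpos)

lemma measurable_haarR {d : ℕ} (R : (Fin d → ℕ) × (Fin d → ℕ)) : Measurable (haarR R) :=
  Finset.measurable_prod _ fun i _ => (measurable_haar1 _ _).comp (measurable_pi_apply i)

lemma abs_haarR_le_one {d : ℕ} (R : (Fin d → ℕ) × (Fin d → ℕ)) (x : Fin d → ℝ) :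
    |haarR R x| ≤ 1 := by
  rw [haarR, abs_prod]
  exact prod_le_one (fun _ _ => abs_nonneg _) fun _ _ => abs_haar1_le_one _ _ _

lemma memLp_top_haarR {d : ℕ} (R : (Fin d → ℕ) × (Fin d → ℕ)) (μ : Measure (Fin d → ℝ)) :
    MemLp (haarR R) ∞ μ :=
  memLp_top_of_bound (measurable_haarR R).aestronglyMeasurable 1
    (Filter.Eventually.of_forall (abs_haarR_le_one R))

instance (d : ℕ) : IsProbabilityMeasure (volume.restrict (unitCube d)) :=
  ⟨by rw [Measure.restrict_apply_univ, unitCube, volume_pi_pi]; simp⟩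

/-- `⋃_{r ∈ A} 𝓡_r`, with rectangles encoded as in `haarR`. -/
def dyadicRects {d : ℕ} (A : Finset (Fin d → ℕ)) : Finset ((Fin d → ℕ) × (Fin d → ℕ)) :=
  A.biUnion fun r => (Fintype.piFinset fun i => range (2 ^ r i)).image (Prod.mk r)

lemma mem_dyadicRects {d : ℕ} {A : Finset (Fin d → ℕ)} {R : (Fin d → ℕ) × (Fin d → ℕ)} :
    R ∈ dyadicRects A ↔ R.1 ∈ A ∧ ∀ i, R.2 i < 2 ^ R.1 i := by
  simp only [dyadicRects, mem_biUnion, mem_image, Fintype.mem_piFinset, mem_range]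
  constructor
  · rintro ⟨r, hr, j, hj, rfl⟩
    exact ⟨hr, hj⟩
  · rintro ⟨hr, hj⟩
    exact ⟨R.1, hr, R.2, hj, rfl⟩

lemma sum_rfun_eq_sum_dyadicRects (ε : (Fin 3 → ℕ) × (Fin 3 → ℕ) → ℝ)
    (A : Finset (Fin 3 → ℕ)) (x : Fin 3 → ℝ) :
    ∑ r ∈ A, rfun ε r x = ∑ R ∈ dyadicRects A, ε R * haarR R x := by
  rw [sum_finset_product (dyadicRects A) A fun r => Fintype.piFinset fun i => range (2 ^ r i)]
  · rfl
  · simp [mem_dyadicRects]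

lemma apply_zero_lt_of_mem_Apart {n q : ℕ} {m : ℕ → ℕ}
    (hmono : ∀ t < q, m t < m (t + 1)) {t₁ t₂ : ℕ} (ht : t₁ < t₂) (ht₂ : t₂ ≤ q)
    {r₁ r₂ : Fin 3 → ℕ} (hr₁ : r₁ ∈ Apart n m t₁) (hr₂ : r₂ ∈ Apart n m t₂) : r₁ 0 < r₂ 0 := by
  have hm : MonotoneOn m (Set.Iic q) :=
    (strictMonoOn_Iic_of_lt_succ fun t ht => by simpa using hmono t ht).monotoneOn
  have := hm (Set.mem_Iic.mpr (by omega)) (Set.mem_Iic.mpr (by omega)) (Nat.le_sub_one_of_lt ht)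
  simp only [Apart, mem_filter] at hr₁ hr₂
  omega

lemma eq_of_mem_Apart_of_apply_zero_eq {n q : ℕ} {m : ℕ → ℕ}
    (hmono : ∀ t < q, m t < m (t + 1)) {t₁ t₂ : ℕ} (ht₁ : t₁ ≤ q) (ht₂ : t₂ ≤ q)
    {r₁ r₂ : Fin 3 → ℕ} (hr₁ : r₁ ∈ Apart n m t₁) (hr₂ : r₂ ∈ Apart n m t₂)
    (h : r₁ 0 = r₂ 0) : t₁ = t₂ := by
  by_contra hne
  rcases Nat.lt_or_gt_of_ne hne with hlt | hlt
  · exact (apply_zero_lt_of_mem_Apart hmono hlt ht₂ hr₁ hr₂).ne h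
  · exact (apply_zero_lt_of_mem_Apart hmono hlt ht₁ hr₂ hr₁).ne' h

theorem riesz_product_mean_one_general (n q : ℕ) (m : ℕ → ℕ)
    (hmono : ∀ t < q, m t < m (t + 1))
    (ε : ((Fin 3 → ℕ) × (Fin 3 → ℕ)) → ℝ)
    (c : ℕ → ℝ) :
    (∫ x in unitCube 3, ∏ t ∈ Finset.Icc 1 q,
      (1 + c t * ∑ r ∈ Apart n m t, rfun ε r x)) = 1 := by
  simp_rw [sum_rfun_eq_sum_dyadicRects]
  refine integral_prod_one_add_mul _ _ _
    (fun t _ => memLp_finsetSum _ fun R _ => (memLp_top_haarR R _).const_mul _)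
    fun u hu hne => ?_
  refine integral_prod_sum_eq_zero _ _ (fun _ R x => ε R * haarR R x)
    (fun _ _ R _ => (memLp_top_haarR R _).const_mul _) fun p hp => ?_
  have hmem : ∀ t : u, p t t.2 ∈ dyadicRects (Apart n m t) := fun t => mem_pi.mp hp t t.2
  simp_rw [prod_mul_distrib]
  rw [integral_const_mul, setIntegral_unitCube_prod_haarR_eq_zero hne.attach 0, mul_zero]
  · intro t₁ _ t₂ _ h
    exact Subtype.ext <| eq_of_mem_Apart_of_apply_zero_eq hmono
      (mem_Icc.mp (hu t₁.2)).2 (mem_Icc.mp (hu t₂.2)).2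
      (mem_dyadicRects.mp (hmem t₁)).1 (mem_dyadicRects.mp (hmem t₂)).1 h
  · exact fun t _ => (mem_dyadicRects.mp (hmem t)).2 0

/-- **Mean one of the Riesz product (proof of (6.9)):** for any coefficients `c_t`,
the Riesz-product-type integral `∫ ∏_{t=1}^q (1 + c_t F_t) = 1`, where
`F_t = ∑_{r ∈ 𝔸_t} f_r`. The partition `I_1 < ⋯ < I_q` of `{0, …, n}` is encoded by
its boundaries `m 0 = 0 < m 1 < ⋯ < m q = n + 1`, with `I_t = [m (t-1), m t)`. -/
theorem riesz_product_mean_one (n q : ℕ) (hq : 1 ≤ q) (m : ℕ → ℕ)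
    (hm0 : m 0 = 0) (hmq : m q = n + 1) (hmono : ∀ t < q, m t < m (t + 1))
    (ε : ((Fin 3 → ℕ) × (Fin 3 → ℕ)) → ℝ) (hε : ∀ R, ε R = 1 ∨ ε R = -1)
    (c : ℕ → ℝ) :
    (∫ x in unitCube 3, ∏ t ∈ Finset.Icc 1 q,
      (1 + c t * ∑ r ∈ Apart n m t, rfun ε r x)) = 1 :=
  riesz_product_mean_one_general n q m hmono ε c
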